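/- arXiv:1505.02632 — 2 statements merged into one kernel-verified Lean document; each statement's English description precedes it below -/
import Mathlib

section
/- Let m ≥ 3 be an integer, let s be an integer with 1 ≤ s ≤ m − 3, and let r be an odd natural number. Then the permutation π_a of Z_{2^m} given by multiplication by a = 3^{2^s · r} has cycle type x_1^{2^{s+2}} · Π_{l=s+3}^{m} x_{2^{l−2−s}}^{2^{s+1}}; that is, it has exactly 2^{s+2} fixed points, and for each l with s+3 ≤ l ≤ m exactly 2^{s+1} cycles of length 2^{l−2−s}. -/
/-!
Write `a = 3 ^ (2 ^ s * r)`. Lifting the exponent gives `v₂(a ^ 2 ^ j - 1) = s + j + 2`, so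
`π_a ^ 2 ^ j` fixes exactly `gcd(2 ^ m, a ^ 2 ^ j - 1) = 2 ^ min m (s + j + 2)` points. The order
of `π_a` divides `|(ℤ/2^m)ˣ|`, a power of two, so every cycle length is a power of two, and the
points on cycles of length exactly `2 ^ (j + 1)` are those fixed by `π_a ^ 2 ^ (j + 1)` but not by
`π_a ^ 2 ^ j`: there are `2 ^ (s + j + 2)` of them when `s + j + 3 ≤ m` and none otherwise.
-/

open Equiv Finset Function

theorem padicValNat_three_pow_sub_one {N : ℕ} (hN : N ≠ 0) (hN2 : Even N) :
    padicValNat 2 (3 ^ N - 1) = padicValNat 2 N + 2 := by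
  have h := padicValNat.pow_two_sub_one (by norm_num : 1 < 3) (by norm_num) hN hN2
  have h4 : padicValNat 2 (3 + 1) = 2 := by simpa using padicValNat.prime_pow (p := 2) 2
  have h2 : padicValNat 2 (3 - 1) = 1 := padicValNat.self (by norm_num)
  omega

theorem Nat.gcd_pow_pow_eq_pow_min (p a b : ℕ) : (p ^ a).gcd (p ^ b) = p ^ min a b := by
  rcases le_total a b with h | h
  · rw [min_eq_left h, Nat.gcd_eq_left (pow_dvd_pow p h)]
  · rw [min_eq_right h, Nat.gcd_eq_right (pow_dvd_pow p h)]

theorem Nat.gcd_prime_pow_eq_pow_min_padicValNat {p : ℕ} [hp : Fact p.Prime] (m : ℕ) {c : ℕ}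
    (hc : c ≠ 0) : (p ^ m).gcd c = p ^ min m (padicValNat p c) := by
  obtain ⟨e, u, hpu, rfl⟩ := Nat.exists_eq_pow_mul_and_not_dvd hc p hp.out.ne_one
  have hu : u.Coprime (p ^ m) := ((Nat.Prime.coprime_iff_not_dvd hp.out).2 hpu).symm.pow_right m
  have hu0 : u ≠ 0 := by rintro rfl; exact hpu (dvd_zero p)
  rw [hu.gcd_mul_right_cancel_right, Nat.gcd_pow_pow_eq_pow_min,
    padicValNat.mul (pow_ne_zero _ hp.out.ne_zero) hu0, padicValNat.prime_pow,
    padicValNat.eq_zero_of_not_dvd hpu, add_zero]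

theorem ZMod.card_setOf_natCast_mul_eq_zero (n c : ℕ) [NeZero n] :
    Nat.card {x : ZMod n | (c : ZMod n) * x = 0} = n.gcd c := by
  have h := IsAddCyclic.card_nsmulAddMonoidHom_ker (ZMod n) c
  rw [Nat.card_zmod] at h
  rw [← h]
  exact Nat.card_congr (Equiv.subtypeEquivRight fun x => by simp [nsmul_eq_mul])

theorem ZMod.card_setOf_natCast_mul_eq_self (n : ℕ) [NeZero n] {b : ℕ} (hb : b ≠ 0) :
    Nat.card {x : ZMod n | (b : ZMod n) * x = x} = n.gcd (b - 1) := by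
  rw [← ZMod.card_setOf_natCast_mul_eq_zero]
  congr
  ext x
  simp only [Nat.cast_pred (Nat.pos_of_ne_zero hb), sub_mul, one_mul, sub_eq_zero]

theorem card_setOf_three_pow_mul_eq_self (m : ℕ) {k r : ℕ} (hk : k ≠ 0) (hr : Odd r) :
    Nat.card {x : ZMod (2 ^ m) | (3 : ZMod (2 ^ m)) ^ (2 ^ k * r) * x = x}
      = 2 ^ min m (k + 2) := by
  have hN : 2 ^ k * r ≠ 0 := mul_ne_zero (by positivity) hr.pos.ne'
  have hval : padicValNat 2 (2 ^ k * r) = k := by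
    rw [padicValNat.mul (by positivity) hr.pos.ne', padicValNat.prime_pow,
      padicValNat.eq_zero_of_not_dvd hr.not_two_dvd_nat, add_zero]
  have h :=
    ZMod.card_setOf_natCast_mul_eq_self (2 ^ m) (b := 3 ^ (2 ^ k * r)) (by positivity)
  push_cast at h
  rw [h, Nat.gcd_prime_pow_eq_pow_min_padicValNat _
      (Nat.sub_ne_zero_of_lt (Nat.one_lt_pow hN (by norm_num))),
    padicValNat_three_pow_sub_one hN ((Nat.even_pow.2 ⟨even_two, hk⟩).mul_right r), hval]

theorem ZMod.orderOf_units_dvd_two_pow {m : ℕ} (u : (ZMod (2 ^ m))ˣ) : orderOf u ∣ 2 ^ m := by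
  refine orderOf_dvd_card.trans ?_
  rw [ZMod.card_units_eq_totient]
  rcases m with _ | m
  · simp
  · rw [Nat.totient_prime_pow_succ Nat.prime_two, pow_succ]
    simp

theorem ZMod.orderOf_toPerm_dvd_two_pow {m : ℕ} (u : (ZMod (2 ^ m))ˣ) :
    orderOf (MulAction.toPerm u : Perm (ZMod (2 ^ m))) ∣ 2 ^ m :=
  (orderOf_map_dvd (MulAction.toPermHom (ZMod (2 ^ m))ˣ (ZMod (2 ^ m))) u).trans
    (ZMod.orderOf_units_dvd_two_pow u)

theorem Multiset.sum_filter_not_dvd_pow_eq {p : ℕ} (hp : 1 < p) {T : Multiset ℕ}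
    (hT : ∀ d ∈ T, ∃ i, d = p ^ i) (j : ℕ) :
    (T.filter (¬ · ∣ p ^ j)).sum
      = (T.filter (¬ · ∣ p ^ (j + 1))).sum + T.count (p ^ (j + 1)) * p ^ (j + 1) := by
  have hsplit : T.filter (¬ · ∣ p ^ j)
      = T.filter (¬ · ∣ p ^ (j + 1)) + T.filter (· = p ^ (j + 1)) := by
    have hdisj : T.filter (fun d => ¬ d ∣ p ^ (j + 1) ∧ d = p ^ (j + 1)) = 0 :=
      filter_eq_nil.2 fun d _ ⟨hd, he⟩ => hd (he ▸ dvd_rfl)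
    rw [filter_add_filter, hdisj, add_zero]
    refine filter_congr fun d hd => ?_
    obtain ⟨i, rfl⟩ := hT d hd
    simp only [Nat.pow_dvd_pow_iff_le_right hp, (Nat.pow_right_injective hp).eq_iff]
    omega
  rw [hsplit, sum_add, filter_eq', sum_replicate, smul_eq_mul]

namespace Equiv.Perm

variable {α : Type*} [Fintype α] [DecidableEq α]

theorem card_support_pow (σ : Perm α) (n : ℕ) :
    #(σ ^ n).support = (σ.cycleType.filter (¬ · ∣ n)).sum := by
  induction σ using cycle_induction_on with
  | base_one => simp
  | base_cycles σ hσ =>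
    rw [hσ.cycleType]
    by_cases h : #σ.support ∣ n
    · rw [(orderOf_dvd_iff_pow_eq_one).1 (hσ.orderOf ▸ h)]
      simp [Multiset.filter_singleton, h]
    · rw [hσ.support_pow_eq_iff.2 (by rwa [hσ.orderOf])]
      simp [Multiset.filter_singleton, h]
  | induction_disjoint σ τ hd _ hσ hτ =>
    rw [hd.cycleType_mul, Multiset.filter_add, Multiset.sum_add, ← hσ, ← hτ,
      hd.commute.mul_pow, (hd.pow_disjoint_pow n n).card_support_mul]

theorem card_fixedPoints_pow_add_sum_filter (σ : Perm α) (n : ℕ) :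
    Nat.card (fixedPoints ⇑(σ ^ n)) + (σ.cycleType.filter (¬ · ∣ n)).sum
      = Fintype.card α := by
  rw [Nat.card_eq_fintype_card, card_fixedPoints, sum_cycleType, card_support_pow,
    ← card_support_pow]
  exact Nat.sub_add_cancel (card_le_univ _)

theorem exists_eq_pow_succ_of_mem_cycleType {p k : ℕ} (hp : p.Prime) {σ : Perm α}
    (hσ : orderOf σ ∣ p ^ k) {d : ℕ} (hd : d ∈ σ.cycleType) : ∃ i, d = p ^ (i + 1) := by
  obtain ⟨i, -, rfl⟩ := (Nat.dvd_prime_pow hp).1 ((dvd_of_mem_cycleType hd).trans hσ)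
  obtain _ | i := i
  · simpa using two_le_of_mem_cycleType hd
  · exact ⟨i, rfl⟩

theorem count_cycleType_mul_add_card_fixedPoints {p k : ℕ} (hp : p.Prime) {σ : Perm α}
    (hσ : orderOf σ ∣ p ^ k) (j : ℕ) :
    σ.cycleType.count (p ^ (j + 1)) * p ^ (j + 1) + Nat.card (fixedPoints ⇑(σ ^ p ^ j))
      = Nat.card (fixedPoints ⇑(σ ^ p ^ (j + 1))) := by
  have hsplit := Multiset.sum_filter_not_dvd_pow_eq hp.one_lt (fun d hd =>
    let ⟨i, hi⟩ := exists_eq_pow_succ_of_mem_cycleType hp hσ hd; ⟨i + 1, hi⟩) j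
  have hj := σ.card_fixedPoints_pow_add_sum_filter (p ^ j)
  have hj' := σ.card_fixedPoints_pow_add_sum_filter (p ^ (j + 1))
  omega

end Equiv.Perm

theorem card_fixedPoints_toPerm_pow_two_pow {m s r : ℕ} (hs : s ≠ 0) (hr : Odd r)
    {u : (ZMod (2 ^ m))ˣ} (hu : (u : ZMod (2 ^ m)) = 3 ^ (2 ^ s * r)) (j : ℕ) :
    Nat.card (fixedPoints ⇑(MulAction.toPerm u ^ 2 ^ j : Perm (ZMod (2 ^ m))))
      = 2 ^ min m (s + j + 2) := by
  have hpow : ((u ^ 2 ^ j : (ZMod (2 ^ m))ˣ) : ZMod (2 ^ m)) = 3 ^ (2 ^ (s + j) * r) := by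
    rw [Units.val_pow_eq_pow_val, hu, ← pow_mul, pow_add]
    ring_nf
  have hperm :
      (MulAction.toPerm u ^ 2 ^ j : Perm (ZMod (2 ^ m))) = MulAction.toPerm (u ^ 2 ^ j) :=
    (map_pow (MulAction.toPermHom (ZMod (2 ^ m))ˣ (ZMod (2 ^ m))) u _).symm
  rw [hperm]
  show Nat.card {x : ZMod (2 ^ m) | ((u ^ 2 ^ j : (ZMod (2 ^ m))ˣ) : ZMod (2 ^ m)) * x = x} = _
  rw [hpow, card_setOf_three_pow_mul_eq_self m (by omega) hr, add_right_comm]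

theorem count_cycleType_toPerm_two_pow {m s r : ℕ} (hs : s ≠ 0) (hr : Odd r)
    {u : (ZMod (2 ^ m))ˣ} (hu : (u : ZMod (2 ^ m)) = 3 ^ (2 ^ s * r)) (j : ℕ) :
    (MulAction.toPerm u : Perm (ZMod (2 ^ m))).cycleType.count (2 ^ (j + 1))
      = if s + j + 3 ≤ m then 2 ^ (s + 1) else 0 := by
  have h := Equiv.Perm.count_cycleType_mul_add_card_fixedPoints Nat.prime_two
    (ZMod.orderOf_toPerm_dvd_two_pow u) j
  simp only [card_fixedPoints_toPerm_pow_two_pow hs hr hu] at h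
  split_ifs with hj
  · rw [min_eq_right (by omega), min_eq_right (by omega)] at h
    have hdouble :
        2 ^ (s + (j + 1) + 2) = 2 ^ (s + 1) * 2 ^ (j + 1) + 2 ^ (s + j + 2) := by ring
    exact Nat.eq_of_mul_eq_mul_right (m := 2 ^ (j + 1)) (by positivity) (by omega)
  · rw [min_eq_left (by omega), min_eq_left (by omega), add_eq_right] at h
    exact (mul_eq_zero.1 h).resolve_right (by positivity)

theorem count_sum_replicate_two_pow (s m j : ℕ) :
    (∑ l ∈ Icc (s + 3) m, Multiset.replicate (2 ^ (s + 1)) (2 ^ (l - 2 - s))).count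
        (2 ^ (j + 1)) = if s + j + 3 ≤ m then 2 ^ (s + 1) else 0 := by
  rw [Multiset.count_sum', Finset.sum_congr rfl
    (g := fun l => if s + j + 3 = l then 2 ^ (s + 1) else 0) fun l hl => ?_, Finset.sum_ite_eq]
  · simp only [Finset.mem_Icc]
    split_ifs <;> omega
  · simp only [Finset.mem_Icc] at hl
    simp only [Multiset.count_replicate, (Nat.pow_right_injective le_rfl).eq_iff]
    split_ifs <;> omega

theorem exists_eq_two_pow_succ_of_mem_sum_replicate {s m d : ℕ}
    (hd : d ∈ ∑ l ∈ Icc (s + 3) m,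
      Multiset.replicate (2 ^ (s + 1)) (2 ^ (l - 2 - s))) :
    ∃ i, d = 2 ^ (i + 1) := by
  obtain ⟨l, hl, hd⟩ := Multiset.mem_sum.1 hd
  rw [Finset.mem_Icc] at hl
  exact ⟨l - 3 - s, by rw [Multiset.eq_of_mem_replicate hd]; congr 1; omega⟩

/-- Let `m ≥ 3`, `1 ≤ s ≤ m − 3`, and `r` odd. The permutation
`π_a` of `ℤ_{2^m}` given by multiplication by `a = 3^(2^s·r)` has cycle type
`x_1^(2^(s+2)) · Π_{l=s+3}^{m} x_{2^(l−2−s)}^(2^(s+1))`: it has exactly `2^(s+2)`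
fixed points, and for each `s+3 ≤ l ≤ m` exactly `2^(s+1)` cycles of length
`2^(l−2−s)` (the cycle type multiset records the nontrivial cycle lengths). -/
theorem cycle_type_three_pow_two_pow (m s r : ℕ) (hs1 : 1 ≤ s)
    (hs2 : s ≤ m - 3) (hr : Odd r) :
    Nat.card {x : ZMod (2 ^ m) | (3 : ZMod (2 ^ m)) ^ (2 ^ s * r) * x = x}
        = 2 ^ (s + 2) ∧
    Equiv.Perm.cycleType
        (MulAction.toPerm
          (ZMod.unitOfCoprime (3 ^ (2 ^ s * r))
              (Nat.Coprime.pow (2 ^ s * r) m (by norm_num)) :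
            (ZMod (2 ^ m))ˣ) :
          Equiv.Perm (ZMod (2 ^ m)))
      = ∑ l ∈ Finset.Icc (s + 3) m,
          Multiset.replicate (2 ^ (s + 1)) (2 ^ (l - 2 - s)) := by
  have hs : s ≠ 0 := Nat.one_le_iff_ne_zero.mp hs1
  refine ⟨by rw [card_setOf_three_pow_mul_eq_self m hs hr, min_eq_right (by omega)], ?_⟩
  have hu := ZMod.coe_unitOfCoprime (n := 2 ^ m) (3 ^ (2 ^ s * r))
    (Nat.Coprime.pow (2 ^ s * r) m (by norm_num))
  push_cast at hu
  ext d
  by_cases hd : ∃ j, d = 2 ^ (j + 1)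
  · obtain ⟨j, rfl⟩ := hd
    rw [count_cycleType_toPerm_two_pow hs hr hu, count_sum_replicate_two_pow]
  · rw [Multiset.count_eq_zero_of_notMem fun h =>
        hd (Equiv.Perm.exists_eq_pow_succ_of_mem_cycleType Nat.prime_two
          (ZMod.orderOf_toPerm_dvd_two_pow _) h),
      Multiset.count_eq_zero_of_notMem fun h => hd (exists_eq_two_pow_succ_of_mem_sum_replicate h)]
end

section
/- Let p be an odd prime, m ≥ 1, let β be a primitive root modulo p^m, and let 1 ≤ k ≤ φ(p^m). Then the permutation π_{β^k} of Z_{p^m} given by multiplication by β^k has cycle type Π_{i=0}^{m} x_{u(i,k)}^{v(i,k)}, where v(i,k) = gcd(φ(p^i), k) and u(i,k) = φ(p^i)/v(i,k); that is, for each 0 ≤ i ≤ m, the elements of Z_{p^m} of additive order p^i split into exactly v(i,k) cycles of π_{β^k}, each of length u(i,k). -/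
/-!
If `x ∈ ZMod n` has additive order `d`, then `g * x = x` exactly when `g ≡ 1 [MOD d]`, so the
cycle of `x` under multiplication by `g` has length the multiplicative order of `g` modulo `d`.
A primitive root modulo `p ^ m` stays primitive modulo `p ^ i`, hence `β ^ k` has order
`φ(p ^ i) / gcd(φ(p ^ i), k)` there. All `φ(p ^ i)` elements of order `p ^ i` thus lie on
cycles of that common length, and counting gives `gcd(φ(p ^ i), k)` cycles.
-/

open Function Subgroup

theorem orderOf_map_eq_card_of_surjective {G H : Type*} [Group G] [Finite G] [Group H]
    (f : G →* H) (hf : Surjective f) {g : G} (hg : orderOf g = Nat.card G) :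
    orderOf (f g) = Nat.card H := by
  have htop : zpowers g = ⊤ := (card_eq_iff_eq_top _).mp (by rw [Nat.card_zpowers, hg])
  apply orderOf_eq_card_of_zpowers_eq_top
  rw [← MonoidHom.map_zpowers, htop, map_top_of_surjective f hf]

theorem Setoid.card_quotient_mul_eq_card {α : Type*} [Finite α] (s : Setoid α) {u : ℕ}
    (hu : ∀ x, Nat.card {y // s x y} = u) : Nat.card (Quotient s) * u = Nat.card α := by
  have hfiber : ∀ q : Quotient s, Nat.card {y // Quotient.mk s y = q} = u := by
    refine Quotient.ind fun x => ?_
    rw [← hu x]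
    exact Nat.card_congr (Equiv.subtypeEquivRight fun y => Quotient.eq.trans (s.comm' ..))
  have := Fintype.ofFinite α
  have := Fintype.ofFinite (Quotient s)
  rw [← Nat.card_congr (Equiv.sigmaFiberEquiv (Quotient.mk s)), Nat.card_sigma]
  simp [hfiber]

namespace Equiv.Perm

variable {α : Type*} (σ : Perm α)

theorem sameCycle_iff_mem_orbit_zpowers {x y : α} :
    σ.SameCycle x y ↔ y ∈ MulAction.orbit (zpowers σ) x := by
  rw [MulAction.mem_orbit_iff, Subgroup.exists_zpowers]
  rfl

theorem card_sameCycle_eq_minimalPeriod [Finite α] (x : α) :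
    Nat.card {y // σ.SameCycle x y} = minimalPeriod σ x := by
  classical
  have := Fintype.ofFinite α
  change _ = minimalPeriod (σ • ·) x
  rw [MulAction.minimalPeriod_eq_card, ← Nat.card_eq_fintype_card]
  exact Nat.card_congr (Equiv.subtypeEquivRight fun y => σ.sameCycle_iff_mem_orbit_zpowers)

theorem minimalPeriod_subtypePerm {p : α → Prop} (h : ∀ x, p (σ x) ↔ p x) (x : {x // p x}) :
    minimalPeriod (σ.subtypePerm h) x = minimalPeriod σ x := by
  refine minimalPeriod_eq_minimalPeriod_iff.mpr fun n => ?_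
  rw [IsPeriodicPt, IsFixedPt, IsPeriodicPt, IsFixedPt, ← coe_pow, ← coe_pow, subtypePerm_pow,
    Subtype.ext_iff, subtypePerm_apply]

variable [Finite α]

theorem card_quot_sameCycle_mul_eq_card {u : ℕ} (hu : ∀ x, minimalPeriod σ x = u) :
    Nat.card (Quot σ.SameCycle) * u = Nat.card α :=
  (SameCycle.setoid σ).card_quotient_mul_eq_card fun x =>
    (σ.card_sameCycle_eq_minimalPeriod x).trans (hu x)

theorem card_quot_sameCycle_subtype_mul_eq_card {p : α → Prop} (h : ∀ x, p (σ x) ↔ p x)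
    {u : ℕ} (hu : ∀ x, p x → minimalPeriod σ x = u) :
    Nat.card (Quot fun x y : {x // p x} => σ.SameCycle x y) * u = Nat.card {x // p x} := by
  have hrel : (fun x y : {x // p x} => σ.SameCycle x y) = (σ.subtypePerm h).SameCycle := by
    ext
    exact sameCycle_subtypePerm.symm
  rw [hrel]
  exact card_quot_sameCycle_mul_eq_card _ fun x =>
    (σ.minimalPeriod_subtypePerm h x).trans (hu x x.2)

end Equiv.Perm

namespace ZMod

variable {n d : ℕ} [NeZero n]

theorem mul_eq_zero_iff_castHom_eq_zero (h : d ∣ n) {x : ZMod n} (hx : addOrderOf x = d)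
    (a : ZMod n) : a * x = 0 ↔ castHom h (ZMod d) a = 0 := by
  rw [← a.natCast_zmod_val, ← nsmul_eq_mul, ← addOrderOf_dvd_iff_nsmul_eq_zero, hx,
    map_natCast, natCast_eq_zero_iff]

theorem minimalPeriod_mul_left_eq_orderOf_castHom (h : d ∣ n) (g : ZMod n) {x : ZMod n}
    (hx : addOrderOf x = d) : minimalPeriod (g * ·) x = orderOf (castHom h (ZMod d) g) := by
  rw [orderOf, minimalPeriod_eq_minimalPeriod_iff]
  intro N
  rw [isPeriodicPt_mul_iff_pow_eq_one, IsPeriodicPt, IsFixedPt, mul_left_iterate_apply,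
    ← sub_eq_zero, ← sub_one_mul, mul_eq_zero_iff_castHom_eq_zero h hx, map_sub, map_pow,
    map_one, sub_eq_zero]

theorem orderOf_natCast_eq_totient_of_dvd (h : d ∣ n) {β : ℕ} (hβ : β.Coprime n)
    (hgen : orderOf (β : ZMod n) = n.totient) : orderOf (β : ZMod d) = d.totient := by
  have : NeZero d := NeZero.of_pos (Nat.pos_of_dvd_of_pos h (NeZero.pos n))
  have hu : orderOf (unitOfCoprime β hβ) = Nat.card (ZMod n)ˣ := by
    rw [← orderOf_units, coe_unitOfCoprime, hgen, Nat.card_eq_fintype_card,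
      card_units_eq_totient]
  have := orderOf_map_eq_card_of_surjective (unitsMap h) (unitsMap_surjective h) hu
  rwa [← orderOf_units, unitsMap_def, Units.coe_map, MonoidHom.coe_coe, coe_unitOfCoprime,
    map_natCast, Nat.card_eq_fintype_card, card_units_eq_totient] at this

theorem card_addOrderOf_eq_totient (h : d ∣ n) :
    Nat.card {x : ZMod n // addOrderOf x = d} = d.totient := by
  rw [Nat.card_eq_fintype_card, Fintype.card_subtype,
    IsAddCyclic.card_addOrderOf_eq_totient (by rwa [ZMod.card])]

end ZMod

theorem cycle_type_primitive_root_pow_general (p m : ℕ) (hp : p.Prime)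
    (β : ℕ) (hβ : Nat.Coprime β (p ^ m))
    (hgen : orderOf (β : ZMod (p ^ m)) = Nat.totient (p ^ m))
    (k : ℕ) :
    ∀ i ≤ m,
      (∀ x : ZMod (p ^ m), addOrderOf x = p ^ i →
        Function.minimalPeriod (fun y : ZMod (p ^ m) => (β : ZMod (p ^ m)) ^ k * y) x
          = Nat.totient (p ^ i) / Nat.gcd (Nat.totient (p ^ i)) k) ∧
      Nat.card (Quot fun x y : {x : ZMod (p ^ m) // addOrderOf x = p ^ i} =>
          (MulAction.toPerm
            (ZMod.unitOfCoprime (β ^ k) (Nat.Coprime.pow_left k hβ))).SameCycle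
            x.val y.val)
        = Nat.gcd (Nat.totient (p ^ i)) k := by
  intro i hi
  have : NeZero (p ^ m) := ⟨pow_ne_zero m hp.ne_zero⟩
  have hdvd : p ^ i ∣ p ^ m := pow_dvd_pow p hi
  have htotient_pos : 0 < (p ^ i).totient := Nat.totient_pos.mpr (pow_pos hp.pos i)
  have hβi := ZMod.orderOf_natCast_eq_totient_of_dvd hdvd hβ hgen
  have hperiod : ∀ x : ZMod (p ^ m), addOrderOf x = p ^ i →
      minimalPeriod (fun y : ZMod (p ^ m) => (β : ZMod (p ^ m)) ^ k * y) x
        = (p ^ i).totient / (p ^ i).totient.gcd k := by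
    intro x hx
    rw [ZMod.minimalPeriod_mul_left_eq_orderOf_castHom hdvd _ hx, map_pow, map_natCast,
      (orderOf_pos_iff.mp (hβi ▸ htotient_pos)).orderOf_pow, hβi]
  refine ⟨hperiod, ?_⟩
  set ζ := ZMod.unitOfCoprime (β ^ k) (hβ.pow_left k)
  have hζ : ⇑(MulAction.toPerm ζ) = fun y => (β : ZMod (p ^ m)) ^ k * y := by
    ext y
    rw [MulAction.toPerm_apply, Units.smul_def, smul_eq_mul, ZMod.coe_unitOfCoprime, Nat.cast_pow]
  have hcount := (MulAction.toPerm ζ).card_quot_sameCycle_subtype_mul_eq_card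
    (p := fun x => addOrderOf x = p ^ i)
    (fun x => by
      rw [MulAction.toPerm_apply, ← DistribMulAction.toAddEquiv_apply, AddEquiv.addOrderOf_eq])
    (fun x hx => hζ ▸ hperiod x hx)
  rw [ZMod.card_addOrderOf_eq_totient hdvd] at hcount
  have hgcd_dvd : (p ^ i).totient.gcd k ∣ (p ^ i).totient := Nat.gcd_dvd_left _ _
  refine Nat.eq_of_mul_eq_mul_right (Nat.div_pos (Nat.le_of_dvd htotient_pos hgcd_dvd)
    (Nat.gcd_pos_of_pos_left k htotient_pos)) ?_
  rw [hcount, Nat.mul_div_cancel' hgcd_dvd]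

/-- Let `p` be an odd prime, `m ≥ 1`, `β` a primitive root modulo
`p^m`, and `1 ≤ k ≤ φ(p^m)`. The permutation `π_{β^k}` of `ℤ_{p^m}` has cycle type
`Π_{i=0}^{m} x_{u(i,k)}^{v(i,k)}` where `v(i,k) = gcd(φ(p^i), k)` and
`u(i,k) = φ(p^i)/v(i,k)`: for each `0 ≤ i ≤ m`, the elements of additive order `p^i`
split into exactly `v(i,k)` cycles of `π_{β^k}`, each of length `u(i,k)`. -/
theorem cycle_type_primitive_root_pow (p m : ℕ) (hp : p.Prime) (hp2 : p ≠ 2)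
    (hm : 1 ≤ m) (β : ℕ) (hβ : Nat.Coprime β (p ^ m))
    (hgen : orderOf (β : ZMod (p ^ m)) = Nat.totient (p ^ m))
    (k : ℕ) (hk1 : 1 ≤ k) (hk2 : k ≤ Nat.totient (p ^ m)) :
    ∀ i ≤ m,
      (∀ x : ZMod (p ^ m), addOrderOf x = p ^ i →
        Function.minimalPeriod (fun y : ZMod (p ^ m) => (β : ZMod (p ^ m)) ^ k * y) x
          = Nat.totient (p ^ i) / Nat.gcd (Nat.totient (p ^ i)) k) ∧
      Nat.card (Quot fun x y : {x : ZMod (p ^ m) // addOrderOf x = p ^ i} =>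
          (MulAction.toPerm
            (ZMod.unitOfCoprime (β ^ k) (Nat.Coprime.pow_left k hβ))).SameCycle
            x.val y.val)
        = Nat.gcd (Nat.totient (p ^ i)) k :=
  cycle_type_primitive_root_pow_general p m hp β hβ hgen k
end
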